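/- arXiv:math/0511693 — 2 statements merged into one kernel-verified Lean document; each statement's English description precedes it below -/
import Mathlib

section
/- Let μ₁ = r μ₂ with μ₁, μ₂ nonzero complex numbers satisfying |μᵢ−1| ≤ 1 and 0 < r ≤ 1, and let 0 ≤ β₂ ≤ r β₁ < 1. If a holomorphic nonvanishing function f on the open unit disk with f(0)=1 satisfies Re((2/μ₁)·(zf'(z)/f(z)) + (1+z)/(1−z)) > β₁ on Δ, then it satisfies Re((2/μ₂)·(zf'(z)/f(z)) + (1+z)/(1−z)) > β₂ on Δ. -/
/-!
Since `μ₁ = r μ₂`, the second expression is the convex combination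
`r · (first expression) + (1 - r) · (1 + z)/(1 - z)`. The first term has real part above
`r β₁ ≥ β₂`, and the Cayley transform `(1 + z)/(1 - z)` maps the unit disk into the right
half-plane, so the second term has nonnegative real part.
-/

open Complex MeasureTheory Metric

theorem Complex.re_one_add_div_one_sub_pos {z : ℂ} (hz : ‖z‖ < 1) :
    0 < ((1 + z) / (1 - z)).re := by
  have hz1 : 1 - z ≠ 0 := by
    rintro h
    simp [← sub_eq_zero.mp h] at hz
  have hnormSq : normSq z < 1 := by
    rw [normSq_eq_norm_sq]
    nlinarith [norm_nonneg z]
  rw [div_re, ← add_div]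
  refine div_pos ?_ (normSq_pos.mpr hz1)
  simp only [add_re, sub_re, one_re, add_im, sub_im, one_im]
  nlinarith [normSq_apply z]

theorem div_mul_add_eq_convex_comb (c μ w q : ℂ) {r : ℝ} (hr : r ≠ 0) :
    c / μ * w + q = r * (c / (r * μ) * w + q) + (1 - r) * q := by
  have hr' : (r : ℂ) ≠ 0 := by exact_mod_cast hr
  rw [mul_add, ← mul_assoc, ← mul_div_assoc, mul_div_mul_left _ _ hr']
  ring

theorem lt_re_convex_comb {a q : ℂ} {r β₁ β₂ : ℝ} (hr0 : 0 < r) (hr1 : r ≤ 1)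
    (ha : β₁ < a.re) (hq : 0 ≤ q.re) (hβ : β₂ ≤ r * β₁) :
    β₂ < ((r : ℂ) * a + (1 - r) * q).re := by
  have hre : ((r : ℂ) * a + (1 - r) * q).re = r * a.re + (1 - r) * q.re := by
    simp
  rw [hre]
  nlinarith [mul_nonneg (sub_nonneg.mpr hr1) hq]

theorem stmt4_general (μ₁ μ₂ : ℂ) (r : ℝ) (hr0 : 0 < r) (hr1 : r ≤ 1)
    (hμ : μ₁ = (r : ℂ) * μ₂)
    (β₁ β₂ : ℝ) (hβ₂ : β₂ ≤ r * β₁)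
    (f : ℂ → ℂ)
    (hre : ∀ z ∈ ball (0 : ℂ) 1,
      (β₁ : ℝ) < ((2 / μ₁) * (z * deriv f z / f z) + (1 + z) / (1 - z)).re) :
    ∀ z ∈ ball (0 : ℂ) 1,
      (β₂ : ℝ) < ((2 / μ₂) * (z * deriv f z / f z) + (1 + z) / (1 - z)).re := by
  intro z hz
  have hcayley := Complex.re_one_add_div_one_sub_pos (mem_ball_zero_iff.mp hz)
  rw [div_mul_add_eq_convex_comb 2 μ₂ _ _ hr0.ne', ← hμ]
  exact lt_re_convex_comb hr0 hr1 (hre z hz) hcayley.le hβ₂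

theorem stmt4 (μ₁ μ₂ : ℂ) (r : ℝ) (hr0 : 0 < r) (hr1 : r ≤ 1)
    (hμ : μ₁ = (r : ℂ) * μ₂)
    (hμ₁0 : μ₁ ≠ 0) (hμ₂0 : μ₂ ≠ 0)
    (hμ₁ : ‖μ₁ - 1‖ ≤ 1) (hμ₂ : ‖μ₂ - 1‖ ≤ 1)
    (β₁ β₂ : ℝ) (hβ₁0 : 0 ≤ β₁) (hβ₁lt : β₁ < 1)
    (hβ₂0 : 0 ≤ β₂) (hβ₂lt : β₂ < 1) (hβ₂ : β₂ ≤ r * β₁)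
    (f : ℂ → ℂ) (hfd : DifferentiableOn ℂ f (ball (0 : ℂ) 1))
    (hf0 : f 0 = 1) (hfne : ∀ z ∈ ball (0 : ℂ) 1, f z ≠ 0)
    (hre : ∀ z ∈ ball (0 : ℂ) 1,
      (β₁ : ℝ) < ((2 / μ₁) * (z * deriv f z / f z) + (1 + z) / (1 - z)).re) :
    ∀ z ∈ ball (0 : ℂ) 1,
      (β₂ : ℝ) < ((2 / μ₂) * (z * deriv f z / f z) + (1 + z) / (1 - z)).re :=
  stmt4_general μ₁ μ₂ r hr0 hr1 hμ β₁ β₂ hβ₂ f hre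
end

section
/- Let β ∈ [0,1), μ ∈ (0,2] real, σ a probability measure on the unit circle, and f(z) = (1−z)^μ exp(−μ(1−β)∫ log(1−zζ̄) dσ(ζ)). Then for all z ∈ Δ: |f'(z)| ≤ 2μ|1−z|^μ / ((1−|z|²)(1−|z|)^{μ(1−β)}). -/
/-!
Write `f = (1 - z) ^ μ * exp (-μ (1 - β) G)` with `G z = ∫ log (1 - z ζ̄) dσ(ζ)`, so that
`f' = μ f (-(1 - z)⁻¹ + (1 - β) I)` with `I z = ∫ ζ̄ / (1 - z ζ̄) dσ(ζ)`.
Since `|1 - z ζ̄| ≥ 1 - |z|`, `Re G z ≥ log (1 - |z|)`, whence `|f z| ≤ |1 - z| ^ μ / (1 - |z|) ^ (μ (1 - β))`.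
For `|ζ| = 1` the point `ζ̄ / (1 - z ζ̄) = 1 / (ζ - z)` lies on the circle of centre
`z̄ / (1 - |z|²)` and radius `1 / (1 - |z|²)`. So does `(1 - z)⁻¹` (take `ζ = 1`), and the average
`I z` lies in the closed disc; the triangle inequality then bounds `|f' / (μ f)|` by
`(1 + β |z| + (1 - β)) / (1 - |z|²) ≤ 2 / (1 - |z|²)`.
-/

open Complex MeasureTheory Metric ComplexConjugate Filter Topology

lemma one_sub_mem_slitPlane {w : ℂ} (hw : ‖w‖ < 1) : 1 - w ∈ slitPlane := by
  simpa [sub_eq_add_neg] using mem_slitPlane_of_norm_lt_one (z := -w) (by simpa using hw)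

lemma norm_conj_div_one_sub_mul_conj_sub {a z : ℂ} (ha : ‖a‖ = 1) (hz : ‖z‖ < 1) :
    ‖conj a / (1 - z * conj a) - conj z / (1 - ‖z‖ ^ 2 : ℝ)‖ = 1 / (1 - ‖z‖ ^ 2) := by
  have hr : 0 < 1 - ‖z‖ ^ 2 := by nlinarith [norm_nonneg z]
  have hr' : ((1 - ‖z‖ ^ 2 : ℝ) : ℂ) = 1 - z * conj z := by
    rw [mul_conj, normSq_eq_norm_sq]; push_cast; ring
  have hza : 1 - z * conj a = conj a * (a - z) := by
    have : conj a * a = 1 := by rw [mul_comm, mul_conj, normSq_eq_norm_sq, ha]; norm_num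
    linear_combination -this
  have hza0 : a - z ≠ 0 := by rw [sub_ne_zero]; rintro rfl; linarith
  have hza' : 1 - z * conj a ≠ 0 := by
    rw [hza]; exact mul_ne_zero (by simp [← norm_ne_zero_iff, ha]) hza0
  have hr0 : 1 - z * conj z ≠ 0 := by rw [← hr']; exact ofReal_ne_zero.2 hr.ne'
  have key : conj a / (1 - z * conj a) - conj z / (1 - z * conj z)
      = conj (a - z) / ((1 - z * conj a) * (1 - z * conj z)) := by
    rw [div_sub_div _ _ hza' hr0, map_sub]; ring
  rw [hr', key, norm_div, norm_mul, ← hr', hza, norm_mul, norm_conj, norm_conj, ha, norm_real,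
    Real.norm_of_nonneg hr.le]
  field_simp [norm_ne_zero_iff.2 hza0]

lemma norm_neg_inv_one_sub_add_mul_le {β : ℝ} (hβ : 0 ≤ β) (hβ1 : β ≤ 1) {z I : ℂ}
    (hz : ‖z‖ < 1) (hI : ‖I - conj z / (1 - ‖z‖ ^ 2 : ℝ)‖ ≤ 1 / (1 - ‖z‖ ^ 2)) :
    ‖-(1 - z)⁻¹ + (1 - β) * I‖ ≤ 2 / (1 - ‖z‖ ^ 2) := by
  set c := conj z / (1 - ‖z‖ ^ 2 : ℝ)
  have hr : 0 < 1 - ‖z‖ ^ 2 := by nlinarith [norm_nonneg z]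
  have hinv : ‖(1 - z)⁻¹ - c‖ = 1 / (1 - ‖z‖ ^ 2) := by
    simpa [c] using norm_conj_div_one_sub_mul_conj_sub norm_one hz
  have hc : ‖c‖ = ‖z‖ / (1 - ‖z‖ ^ 2) := by
    rw [norm_div, norm_conj, norm_real, Real.norm_of_nonneg hr.le]
  have hβ' : ‖(1 : ℂ) - β‖ = 1 - β := by
    rw [← ofReal_one, ← ofReal_sub, norm_real, Real.norm_of_nonneg (by linarith)]
  calc ‖-(1 - z)⁻¹ + (1 - β) * I‖ = ‖-((1 - z)⁻¹ - c) + (1 - β) * (I - c) - β * c‖ := by ring_nf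
    _ ≤ ‖(1 - z)⁻¹ - c‖ + (1 - β) * ‖I - c‖ + β * ‖c‖ := by
      refine (norm_sub_le _ _).trans (add_le_add ((norm_add_le _ _).trans_eq ?_) ?_)
      · rw [norm_neg, norm_mul, hβ']
      · rw [norm_mul, norm_real, Real.norm_of_nonneg hβ]
    _ ≤ 1 / (1 - ‖z‖ ^ 2) + (1 - β) * (1 / (1 - ‖z‖ ^ 2)) + β * (‖z‖ / (1 - ‖z‖ ^ 2)) := by
      rw [hinv, hc]; gcongr
    _ ≤ 2 / (1 - ‖z‖ ^ 2) := by
      rw [← sub_nonneg]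
      field_simp
      nlinarith [mul_nonneg hβ (sub_nonneg.2 hz.le)]

lemma HasDerivAt.one_sub_cpow_mul_exp {a b G' z : ℂ} {G : ℂ → ℂ} (hG : HasDerivAt G G' z)
    (hz : 1 - z ∈ slitPlane) :
    HasDerivAt (fun w => (1 - w) ^ a * cexp (b * G w))
      ((1 - z) ^ a * cexp (b * G z) * (-a * (1 - z)⁻¹ + b * G')) z := by
  refine ((((hasDerivAt_id z).const_sub 1).cpow_const hz).mul (hG.const_mul b).cexp).congr_deriv ?_
  rw [id, cpow_sub _ _ (slitPlane_ne_zero hz), cpow_one]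
  ring

section UnitCircle

variable (σ : Measure (sphere (0 : ℂ) 1))

lemma one_sub_norm_le_norm_one_sub_mul_conj (z : ℂ) (ζ : sphere (0 : ℂ) 1) :
    1 - ‖z‖ ≤ ‖1 - z * conj (ζ : ℂ)‖ := by
  simpa using norm_sub_norm_le (1 : ℂ) (z * conj (ζ : ℂ))

lemma one_sub_mul_conj_mem_slitPlane {z : ℂ} (hz : ‖z‖ < 1) (ζ : sphere (0 : ℂ) 1) :
    1 - z * conj (ζ : ℂ) ∈ slitPlane :=
  one_sub_mem_slitPlane (by simpa using hz)

lemma continuous_log_one_sub_mul_conj {z : ℂ} (hz : ‖z‖ < 1) :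
    Continuous fun ζ : sphere (0 : ℂ) 1 => log (1 - z * conj (ζ : ℂ)) :=
  Continuous.clog (by fun_prop) (one_sub_mul_conj_mem_slitPlane hz)

lemma continuous_conj_div_one_sub_mul_conj {z : ℂ} (hz : ‖z‖ < 1) :
    Continuous fun ζ : sphere (0 : ℂ) 1 => conj (ζ : ℂ) / (1 - z * conj (ζ : ℂ)) :=
  Continuous.div (by fun_prop) (by fun_prop)
    fun ζ => slitPlane_ne_zero (one_sub_mul_conj_mem_slitPlane hz ζ)

lemma hasDerivAt_integral_log_one_sub_mul_conj [IsFiniteMeasure σ] {z : ℂ} (hz : ‖z‖ < 1) :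
    HasDerivAt (fun w => ∫ ζ, log (1 - w * conj (ζ : ℂ)) ∂σ)
      (-∫ ζ, conj (ζ : ℂ) / (1 - z * conj (ζ : ℂ)) ∂σ) z := by
  obtain ⟨r, hzr, hr⟩ := exists_between hz
  have hzr : ball (0 : ℂ) r ∈ 𝓝 z := isOpen_ball.mem_nhds (mem_ball_zero_iff.2 hzr)
  have hlt {w : ℂ} (hw : w ∈ ball (0 : ℂ) r) : ‖w‖ < 1 := (mem_ball_zero_iff.1 hw).trans hr
  rw [← integral_neg]
  refine (hasDerivAt_integral_of_dominated_loc_of_deriv_le (μ := σ)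
    (F := fun w ζ => log (1 - w * conj (ζ : ℂ)))
    (F' := fun w ζ => -(conj (ζ : ℂ) / (1 - w * conj (ζ : ℂ))))
    (bound := fun _ => (1 - r)⁻¹) hzr ?_ ?_ ?_ ?_ (integrable_const _) ?_).2
  · filter_upwards [hzr] with w hw
    exact (continuous_log_one_sub_mul_conj (hlt hw)).aestronglyMeasurable
  · exact (continuous_log_one_sub_mul_conj hz).integrable_of_hasCompactSupport (.of_compactSpace _)
  · exact (continuous_conj_div_one_sub_mul_conj hz).neg.aestronglyMeasurable
  · refine .of_forall fun ζ w hw => ?_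
    have hw' : ‖w‖ < r := mem_ball_zero_iff.1 hw
    have hle := one_sub_norm_le_norm_one_sub_mul_conj w ζ
    rw [norm_neg, norm_div, norm_conj, norm_eq_of_mem_sphere, one_div]
    exact inv_anti₀ (by linarith) (by linarith)
  · refine .of_forall fun ζ w hw => ?_
    simpa [neg_div] using (((hasDerivAt_id w).mul_const (conj (ζ : ℂ))).const_sub 1).clog
      (one_sub_mul_conj_mem_slitPlane (hlt hw) ζ)

variable [IsProbabilityMeasure σ]

lemma log_one_sub_norm_le_re_integral_log {z : ℂ} (hz : ‖z‖ < 1) :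
    Real.log (1 - ‖z‖) ≤ (∫ ζ, log (1 - z * conj (ζ : ℂ)) ∂σ).re := by
  have hint := (continuous_log_one_sub_mul_conj hz).integrable_of_hasCompactSupport (μ := σ)
    (.of_compactSpace _)
  rw [← RCLike.re_to_complex, ← integral_re hint]
  calc Real.log (1 - ‖z‖) = ∫ _, Real.log (1 - ‖z‖) ∂σ := by simp
    _ ≤ _ := integral_mono (integrable_const _) hint.re fun ζ => by
      simpa [log_re] using Real.log_le_log (by linarith)
        (one_sub_norm_le_norm_one_sub_mul_conj z ζ)

lemma norm_integral_conj_div_one_sub_mul_conj_sub_le {z : ℂ} (hz : ‖z‖ < 1) :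
    ‖(∫ ζ, conj (ζ : ℂ) / (1 - z * conj (ζ : ℂ)) ∂σ) - conj z / (1 - ‖z‖ ^ 2 : ℝ)‖
      ≤ 1 / (1 - ‖z‖ ^ 2) := by
  have hint := (continuous_conj_div_one_sub_mul_conj hz).integrable_of_hasCompactSupport (μ := σ)
    (.of_compactSpace _)
  have hmean : (∫ ζ, conj (ζ : ℂ) / (1 - z * conj (ζ : ℂ)) ∂σ) - conj z / (1 - ‖z‖ ^ 2 : ℝ)
      = ∫ ζ, (conj (ζ : ℂ) / (1 - z * conj (ζ : ℂ)) - conj z / (1 - ‖z‖ ^ 2 : ℝ)) ∂σ := by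
    rw [integral_sub hint (integrable_const _), integral_const, probReal_univ, one_smul]
  rw [hmean]
  simpa using norm_integral_le_of_norm_le_const (μ := σ) (.of_forall fun ζ =>
    (norm_conj_div_one_sub_mul_conj_sub (norm_eq_of_mem_sphere ζ) hz).le)

lemma norm_exp_neg_mul_integral_log_le {t : ℝ} (ht : 0 ≤ t) {z : ℂ} (hz : ‖z‖ < 1) :
    ‖exp (-(t : ℂ) * ∫ ζ, log (1 - z * conj (ζ : ℂ)) ∂σ)‖ ≤ ((1 - ‖z‖) ^ t)⁻¹ := by
  have hlog := log_one_sub_norm_le_re_integral_log σ hz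
  rw [norm_exp, ← ofReal_neg, re_ofReal_mul, ← Real.rpow_neg (by linarith),
    Real.rpow_def_of_pos (by linarith)]
  exact Real.exp_le_exp.2 (by nlinarith)

end UnitCircle

theorem stmt11_general (β : ℝ) (hβ : 0 ≤ β) (hβ1 : β < 1)
    (μ : ℝ) (hμ0 : 0 < μ)
    (σ : Measure (sphere (0:ℂ) 1)) [IsProbabilityMeasure σ]
    (f : ℂ → ℂ)
    (hf : ∀ z ∈ ball (0 : ℂ) 1,
      f z = (1 - z) ^ (μ : ℂ) *
        Complex.exp (-(μ : ℂ) * (1 - (β : ℂ)) *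
          ∫ ζ : sphere (0:ℂ) 1, Complex.log (1 - z * (starRingEnd ℂ) (ζ : ℂ)) ∂σ)) :
    ∀ z ∈ ball (0 : ℂ) 1,
      ‖deriv f z‖ ≤
        2 * μ * ‖1 - z‖ ^ μ /
          ((1 - ‖z‖ ^ 2) * (1 - ‖z‖) ^ (μ * (1 - β))) := by
  intro z hz
  have hz1 : ‖z‖ < 1 := mem_ball_zero_iff.1 hz
  set I := ∫ ζ : sphere (0 : ℂ) 1, conj (ζ : ℂ) / (1 - z * conj (ζ : ℂ)) ∂σ
  have hderiv := ((hasDerivAt_integral_log_one_sub_mul_conj σ hz1).one_sub_cpow_mul_exp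
    (a := μ) (b := -(μ : ℂ) * (1 - β)) (one_sub_mem_slitPlane hz1)).congr_of_eventuallyEq
    (eventually_of_mem (isOpen_ball.mem_nhds hz) hf)
  have hfactor : -(μ : ℂ) * (1 - z)⁻¹ + -(μ : ℂ) * (1 - β) * -I
      = μ * (-(1 - z)⁻¹ + (1 - β) * I) := by ring
  have hexponent : -(μ : ℂ) * (1 - β) = -((μ * (1 - β) : ℝ) : ℂ) := by push_cast; ring
  rw [hderiv.deriv, hfactor, hexponent, norm_mul, norm_mul, norm_cpow_real, norm_mul, norm_real,
    Real.norm_of_nonneg hμ0.le]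
  have h1 : 0 < 1 - ‖z‖ := by linarith
  have h2 : 0 < 1 - ‖z‖ ^ 2 := by nlinarith [norm_nonneg z]
  calc _ ≤ ‖1 - z‖ ^ μ * ((1 - ‖z‖) ^ (μ * (1 - β)))⁻¹ * (μ * (2 / (1 - ‖z‖ ^ 2))) := by
        gcongr
        · exact norm_exp_neg_mul_integral_log_le σ (by nlinarith) hz1
        · exact norm_neg_inv_one_sub_add_mul_le hβ hβ1.le hz1
            (norm_integral_conj_div_one_sub_mul_conj_sub_le σ hz1)
    _ = _ := by field_simp

theorem stmt11 (β : ℝ) (hβ : 0 ≤ β) (hβ1 : β < 1)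
    (μ : ℝ) (hμ0 : 0 < μ) (hμ2 : μ ≤ 2)
    (σ : Measure (sphere (0:ℂ) 1)) [IsProbabilityMeasure σ]
    (f : ℂ → ℂ)
    (hf : ∀ z ∈ ball (0 : ℂ) 1,
      f z = (1 - z) ^ (μ : ℂ) *
        Complex.exp (-(μ : ℂ) * (1 - (β : ℂ)) *
          ∫ ζ : sphere (0:ℂ) 1, Complex.log (1 - z * (starRingEnd ℂ) (ζ : ℂ)) ∂σ)) :
    ∀ z ∈ ball (0 : ℂ) 1,
      ‖deriv f z‖ ≤
        2 * μ * ‖1 - z‖ ^ μ /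
          ((1 - ‖z‖ ^ 2) * (1 - ‖z‖) ^ (μ * (1 - β))) :=
  stmt11_general β hβ hβ1 μ hμ0 σ f hf
end
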